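/- Let 0 < ε < π and let K̄_ε be the infinite-order scaled kernel. Then K̄_ε has compact support inside the periodic interval: K̄_ε(θ) = 0 for every real θ with ε < |θ| ≤ π. -/

import Mathlib

/-- The sinc function: `sinc x = sin x / x` for `x ≠ 0` and `sinc 0 = 1`. -/
noncomputable def sinc (x : ℝ) : ℝ := if x = 0 then 1 else Real.sin x / x

/-- The Fourier coefficient `c_k(ε) = ∏_{n=1}^∞ sinc(kε/2^n)` of the
infinite-order scaled kernel. -/
noncomputable def infKernelCoeff (ε : ℝ) (k : ℕ) : ℝ :=
  ∏' n : ℕ, sinc ((k : ℝ) * ε / 2 ^ (n + 1))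

/-- The infinite-order scaled kernel with range `ε`:
`K̄_ε(θ) = 1/(2π) + (1/π) Σ_{k=1}^∞ c_k(ε) cos(kθ)`. -/
noncomputable def infKernel (ε : ℝ) (θ : ℝ) : ℝ :=
  1 / (2 * Real.pi) +
    (1 / Real.pi) * ∑' k : ℕ, infKernelCoeff ε (k + 1) * Real.cos ((k + 1 : ℝ) * θ)

/-!
Let `S_N(ε, θ) = ∑ₖ P_N((k+1)ε) cos((k+1)θ)`, where `P_N(x) = ∏_{n<N+2} sinc(x/2^(n+1))`
are the partial products of the kernel's coefficients.
For `N = 0` a product-to-sum formula writes `S_0(ε, ·)` as a second difference of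
`∑ₖ cos(ky)/k²`, which is the quadratic `π²/6 - πy/2 + y²/4` on `[0, 2π]`; this gives
`S_0(ε, θ) = -1/2` for `ε < θ < 2π - ε`. Splitting off the factor `sinc((k+1)ε/2)` turns
`S_{N+1}(ε, ·)` into the average of `S_N(ε/2, ·)` over windows of width `ε`, which keeps the
value `-1/2` on that interval. Since `|P_N((k+1)ε)| ≤ 8/((k+1)ε)²`, dominated convergence gives
`∑ₖ c_{k+1}(ε) cos((k+1)θ) = -1/2`, i.e. `K̄_ε(θ) = 0`.
-/

open Filter Topology Finset MeasureTheory
open Real hiding sinc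

theorem sinc_eq_real_sinc : sinc = Real.sinc := rfl

theorem abs_sinc_sub_one_le (x : ℝ) : |sinc x - 1| ≤ x ^ 2 / 6 := by
  rcases eq_or_ne x 0 with rfl | hx
  · simp [sinc]
  rw [sinc_eq_real_sinc, Real.sinc_of_ne_zero hx, div_sub_one hx, abs_div,
    div_le_iff₀ (abs_pos.2 hx), abs_sub_comm]
  calc |x - sin x| ≤ |x| ^ 3 / 6 := abs_sub_sin_le x
    _ = x ^ 2 / 6 * |x| := by rw [pow_succ, sq_abs]; ring

theorem abs_sinc_le_inv_abs {x : ℝ} (hx : x ≠ 0) : |sinc x| ≤ |x|⁻¹ := by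
  rw [sinc_eq_real_sinc, Real.sinc_of_ne_zero hx, abs_div, div_eq_mul_inv]
  exact mul_le_of_le_one_left (inv_nonneg.2 (abs_nonneg x)) (abs_sin_le_one x)

theorem multipliable_sinc_div_two_pow (x : ℝ) :
    Multipliable fun n : ℕ => sinc (x / 2 ^ (n + 1)) := by
  have hsum : Summable fun n : ℕ => sinc (x / 2 ^ (n + 1)) - 1 := by
    refine .of_norm_bounded
      ((summable_geometric_of_lt_one (by norm_num) (by norm_num : (1 / 4 : ℝ) < 1)).mul_left
        (x ^ 2 / 24)) fun n => ?_
    calc ‖sinc (x / 2 ^ (n + 1)) - 1‖ ≤ (x / 2 ^ (n + 1)) ^ 2 / 6 := abs_sinc_sub_one_le _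
      _ = x ^ 2 / 24 * (1 / 4) ^ n := by
        rw [div_pow, ← pow_mul, pow_mul', one_div_pow, pow_succ]; norm_num; ring
  simpa using Real.multipliable_one_add_of_summable hsum

noncomputable def sincProd (N : ℕ) (x : ℝ) : ℝ :=
  ∏ n ∈ range N, sinc (x / 2 ^ (n + 1))

theorem sincProd_succ (N : ℕ) (x : ℝ) :
    sincProd (N + 1) x = sinc (x / 2) * sincProd N (x / 2) := by
  simp only [sincProd, prod_range_succ', zero_add, pow_one, div_div, ← pow_succ']
  ring

theorem sincProd_two (x : ℝ) : sincProd 2 x = sinc (x / 2) * sinc (x / 4) := by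
  norm_num [sincProd, prod_range_succ]

theorem abs_sincProd_le (N : ℕ) {x : ℝ} (hx : x ≠ 0) :
    |sincProd (N + 2) x| ≤ 8 / x ^ 2 := by
  rw [sincProd_succ, sincProd_succ, div_div, abs_mul, abs_mul]
  have h2 : |sinc (x / 2)| ≤ |x / 2|⁻¹ := abs_sinc_le_inv_abs (by positivity)
  have h4 : |sinc (x / (2 * 2))| ≤ |x / (2 * 2)|⁻¹ := abs_sinc_le_inv_abs (by positivity)
  have hN : |sincProd N (x / (2 * 2))| ≤ 1 := by
    rw [sincProd, abs_prod]
    exact prod_le_one (fun _ _ => abs_nonneg _) fun _ _ => Real.abs_sinc_le_one _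
  calc |sinc (x / 2)| * (|sinc (x / (2 * 2))| * |sincProd N (x / (2 * 2))|)
      ≤ |x / 2|⁻¹ * (|x / (2 * 2)|⁻¹ * 1) := by gcongr
    _ = 8 / x ^ 2 := by rw [abs_div, abs_div, ← sq_abs x]; field_simp; norm_num

theorem tendsto_sincProd (x : ℝ) :
    Tendsto (fun N => sincProd N x) atTop (𝓝 (∏' n : ℕ, sinc (x / 2 ^ (n + 1)))) :=
  (multipliable_sinc_div_two_pow x).hasProd.tendsto_prod_nat

noncomputable def cosSeries (a : ℕ → ℝ) (θ : ℝ) : ℝ :=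
  ∑' k : ℕ, a k * cos ((k + 1 : ℝ) * θ)

theorem cosSeries_abs (a : ℕ → ℝ) (θ : ℝ) : cosSeries a |θ| = cosSeries a θ := by
  refine tsum_congr fun k => ?_
  rw [← cos_abs ((k + 1 : ℝ) * θ), abs_mul,
    abs_of_pos (Nat.cast_add_one_pos k : (0 : ℝ) < k + 1)]

theorem norm_coeff_mul_cos_le (a : ℕ → ℝ) (θ : ℝ) (k : ℕ) :
    ‖a k * cos ((k + 1 : ℝ) * θ)‖ ≤ |a k| := by
  rw [norm_mul, Real.norm_eq_abs]
  exact mul_le_of_le_one_right (abs_nonneg _) (abs_cos_le_one _)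

theorem integral_cosSeries {a : ℕ → ℝ} (ha : Summable fun k => |a k|) (h θ : ℝ) :
    ∫ t in (θ - h)..(θ + h), cosSeries a t =
      2 * h * cosSeries (fun k => a k * sinc ((k + 1) * h)) θ := by
  rcases eq_or_ne h 0 with rfl | hh
  · simp
  have hsum : HasSum (fun k : ℕ => ∫ t in (θ - h)..(θ + h), a k * cos ((k + 1 : ℝ) * t))
      (∫ t in (θ - h)..(θ + h), cosSeries a t) :=
    intervalIntegral.hasSum_integral_of_dominated_convergence (fun k _ => |a k|)
      (fun k => by fun_prop) (fun k => ae_of_all _ fun t _ => norm_coeff_mul_cos_le a t k)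
      (ae_of_all _ fun _ _ => ha) intervalIntegrable_const
      (ae_of_all _ fun t _ => (ha.of_norm_bounded (norm_coeff_mul_cos_le a t)).hasSum)
  rw [← hsum.tsum_eq, cosSeries, ← tsum_mul_left]
  refine tsum_congr fun k => ?_
  set m : ℝ := k + 1
  have hm : m ≠ 0 := (Nat.cast_add_one_pos k).ne'
  rw [intervalIntegral.integral_const_mul, intervalIntegral.integral_comp_mul_left _ hm,
    integral_cos, smul_eq_mul, sin_sub_sin, sinc_eq_real_sinc,
    Real.sinc_of_ne_zero (mul_ne_zero hm hh),
    show (m * (θ + h) - m * (θ - h)) / 2 = m * h by ring,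
    show (m * (θ + h) + m * (θ - h)) / 2 = m * θ by ring]
  field_simp

theorem eval_map_bernoulli_two (x : ℝ) :
    (Polynomial.map (algebraMap ℚ ℝ) (Polynomial.bernoulli 2)).eval x = x ^ 2 - x + 1 / 6 := by
  simp [Polynomial.bernoulli, Finset.sum_range_succ, bernoulli_two, Polynomial.eval_monomial]
  ring

theorem hasSum_cos_div_sq {y : ℝ} (h0 : 0 ≤ y) (h2π : y ≤ 2 * π) :
    HasSum (fun k : ℕ => cos ((k + 1 : ℝ) * y) / (k + 1 : ℝ) ^ 2)
      (π ^ 2 / 6 - π * y / 2 + y ^ 2 / 4) := by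
  have hx : y / (2 * π) ∈ Set.Icc (0 : ℝ) 1 :=
    ⟨by positivity, (div_le_one (by positivity)).2 h2π⟩
  have H := (hasSum_nat_add_iff' 1).2 (hasSum_one_div_nat_pow_mul_cos one_ne_zero hx)
  rw [show 2 * 1 = 2 from rfl, eval_map_bernoulli_two] at H
  norm_num at H
  rw [show π ^ 2 / 6 - π * y / 2 + y ^ 2 / 4 =
    (2 * π) ^ 2 / 2 / 2 * ((y / (2 * π)) ^ 2 - y / (2 * π) + 1 / 6) by field_simp; ring]
  refine H.congr_fun fun k => ?_
  rw [show 2 * π * (k + 1) * (y / (2 * π)) = (k + 1) * y by field_simp]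
  ring

theorem sincProd_two_mul_cos {b ε : ℝ} (hb : b ≠ 0) (hε : ε ≠ 0) (θ : ℝ) :
    sincProd 2 (b * ε) * cos (b * θ) =
      2 / ε ^ 2 * (cos (b * (θ + ε / 4)) / b ^ 2 + cos (b * (θ - ε / 4)) / b ^ 2
        - cos (b * (θ + 3 * ε / 4)) / b ^ 2 - cos (b * (θ - 3 * ε / 4)) / b ^ 2) := by
  have hA : b * ε / 4 ≠ 0 := by positivity
  rw [sincProd_two, sinc_eq_real_sinc, Real.sinc_of_ne_zero (by positivity),
    Real.sinc_of_ne_zero hA, show b * ε / 2 = 2 * (b * ε / 4) by ring,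
    show b * (θ + ε / 4) = b * θ + b * ε / 4 by ring,
    show b * (θ - ε / 4) = b * θ - b * ε / 4 by ring,
    show b * (θ + 3 * ε / 4) = b * θ + 3 * (b * ε / 4) by ring,
    show b * (θ - 3 * ε / 4) = b * θ - 3 * (b * ε / 4) by ring]
  simp only [cos_add, cos_sub, cos_three_mul, sin_three_mul, sin_two_mul]
  field_simp
  linear_combination 16 * cos (b * θ) * cos (b * ε / 4) * sin_sq_add_cos_sq (b * ε / 4)

theorem cosSeries_sincProd_two {ε θ : ℝ} (hε : 0 < ε) (h1 : ε < θ) (h2 : θ < 2 * π - ε) :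
    cosSeries (fun k => sincProd 2 ((k + 1) * ε)) θ = -1 / 2 := by
  have H := ((((hasSum_cos_div_sq (y := θ + ε / 4) (by linarith) (by linarith)).add
    (hasSum_cos_div_sq (y := θ - ε / 4) (by linarith) (by linarith))).sub
    (hasSum_cos_div_sq (y := θ + 3 * ε / 4) (by linarith) (by linarith))).sub
    (hasSum_cos_div_sq (y := θ - 3 * ε / 4) (by linarith) (by linarith))).mul_left (2 / ε ^ 2)
  rw [cosSeries, tsum_congr fun k =>
    sincProd_two_mul_cos (Nat.cast_add_one_pos k).ne' hε.ne' θ, H.tsum_eq]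
  field_simp
  ring

theorem summable_div_mul_sq (c ε : ℝ) : Summable fun k : ℕ => c / ((k + 1) * ε) ^ 2 := by
  have h := (summable_nat_add_iff 1).2 (Real.summable_one_div_nat_pow.2 one_lt_two)
  refine (h.mul_left (c / ε ^ 2)).congr fun k => ?_
  push_cast
  rw [mul_pow, div_mul_div_comm, mul_one, mul_comm (ε ^ 2)]

theorem summable_abs_sincProd (N : ℕ) {ε : ℝ} (hε : ε ≠ 0) :
    Summable fun k : ℕ => |sincProd (N + 2) ((k + 1) * ε)| :=
  (summable_div_mul_sq 8 ε).of_nonneg_of_le (fun _ => abs_nonneg _)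
    fun k => abs_sincProd_le N (mul_ne_zero (Nat.cast_add_one_pos k).ne' hε)

theorem cosSeries_sincProd_eq_neg_half (N : ℕ) {ε θ : ℝ} (hε : 0 < ε) (h1 : ε < θ)
    (h2 : θ < 2 * π - ε) :
    cosSeries (fun k => sincProd (N + 2) ((k + 1) * ε)) θ = -1 / 2 := by
  induction N generalizing ε θ with
  | zero => exact cosSeries_sincProd_two hε h1 h2
  | succ N ih =>
    have hε2 : 0 < ε / 2 := half_pos hε
    have hconst : ∀ t ∈ Set.uIcc (θ - ε / 2) (θ + ε / 2),
        cosSeries (fun k => sincProd (N + 2) ((k + 1) * (ε / 2))) t = -1 / 2 := by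
      intro t ht
      rw [Set.uIcc_of_le (by linarith)] at ht
      exact ih hε2 (by linarith [ht.1]) (by linarith [ht.2])
    have hint := integral_cosSeries (summable_abs_sincProd N hε2.ne') (ε / 2) θ
    rw [intervalIntegral.integral_congr hconst, intervalIntegral.integral_const, smul_eq_mul,
      show θ + ε / 2 - (θ - ε / 2) = 2 * (ε / 2) by ring] at hint
    have hcoeff : ∀ k : ℕ, sincProd (N + 1 + 2) ((k + 1) * ε) =
        sincProd (N + 2) ((k + 1) * (ε / 2)) * sinc ((k + 1) * (ε / 2)) := fun k => by
      rw [show N + 1 + 2 = N + 2 + 1 by ring, sincProd_succ, mul_div_assoc, mul_comm]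
    simp only [hcoeff]
    exact (mul_left_cancel₀ (by positivity) hint).symm

theorem infKernel_eq_cosSeries (ε θ : ℝ) :
    infKernel ε θ = 1 / (2 * π) + 1 / π * cosSeries (fun k => infKernelCoeff ε (k + 1)) θ :=
  rfl

theorem tendsto_cosSeries_sincProd {ε : ℝ} (hε : ε ≠ 0) (θ : ℝ) :
    Tendsto (fun N => cosSeries (fun k => sincProd (N + 2) ((k + 1) * ε)) θ) atTop
      (𝓝 (cosSeries (fun k => infKernelCoeff ε (k + 1)) θ)) := by
  refine tendsto_tsum_of_dominated_convergence (summable_div_mul_sq 8 ε) (fun k => ?_)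
    (.of_forall fun N k =>
      (norm_coeff_mul_cos_le (fun k => sincProd (N + 2) ((k + 1) * ε)) θ k).trans
        (abs_sincProd_le N (mul_ne_zero (Nat.cast_add_one_pos k).ne' hε)))
  have hcoeff : infKernelCoeff ε (k + 1) = ∏' n : ℕ, sinc ((k + 1) * ε / 2 ^ (n + 1)) := by
    simp [infKernelCoeff]
  beta_reduce
  rw [hcoeff]
  exact ((tendsto_sincProd _).comp (tendsto_add_atTop_nat 2)).mul_const _

theorem stmt_11_general (ε : ℝ) (hε : 0 < ε) (θ : ℝ)
    (h1 : ε < |θ|) (h2 : |θ| ≤ Real.pi) :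
    infKernel ε θ = 0 := by
  have hconst (N : ℕ) : cosSeries (fun k => sincProd (N + 2) ((k + 1) * ε)) |θ| = -1 / 2 :=
    cosSeries_sincProd_eq_neg_half N hε h1 (by linarith)
  have hsum : cosSeries (fun k => infKernelCoeff ε (k + 1)) θ = -1 / 2 := by
    rw [← cosSeries_abs]
    exact tendsto_nhds_unique (tendsto_cosSeries_sincProd hε.ne' |θ|)
      (tendsto_const_nhds.congr fun N => (hconst N).symm)
  rw [infKernel_eq_cosSeries, hsum]
  field_simp
  ring

/-- For `0 < ε < π`, the infinite-order scaled kernel `K̄_ε` has compact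
support inside the periodic interval: `K̄_ε(θ) = 0` whenever `ε < |θ| ≤ π`. -/
theorem stmt_11 (ε : ℝ) (hε : 0 < ε) (hεπ : ε < Real.pi) (θ : ℝ)
    (h1 : ε < |θ|) (h2 : |θ| ≤ Real.pi) :
    infKernel ε θ = 0 :=
  stmt_11_general ε hε θ h1 h2
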